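/- For every t > 0, every x > 0, and every bounded continuous f : ℝ → ℝ: √(2/(π t)) ∫_0^∞ e^{−s²/(2t)} C*(s)f(x) ds = ∫_{−∞}^∞ γ⁺(t,x,y) f(y) dy, where γ⁺(t,x,y) = (1/√(2πt))·(e^{−(y−x)²/(2t)} + ((p−q)/(p+q))·e^{−(y+x)²/(2t)}) for y > 0 and γ⁺(t,x,y) = (1/√(2πt))·(2q/(p+q))·e^{−(y−x)²/(2t)} for y < 0. -/

import Mathlib

open MeasureTheory Real Filter

/-- The dual cosine family `C*(t)` (extended to all real `t` by `C*(t) = C*(-t)`). -/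
noncomputable def Cstar (p q t : ℝ) (f : ℝ → ℝ) : ℝ → ℝ := fun x =>
  if |t| ≤ |x| then (f (x + |t|) + f (x - |t|)) / 2
  else if x ≤ 0 then
    (f (x + |t|) + f (x - |t|)) / 2 + (q - p) / (2 * (p + q)) * (f (-x - |t|) - f (x + |t|))
  else
    (f (x + |t|) + f (x - |t|)) / 2 + (p - q) / (2 * (p + q)) * (f (|t| - x) - f (x - |t|))

/-- Transition density `γ⁺(t,x,y)` for a starting point `x > 0`. -/
noncomputable def gammaPlus (p q t x y : ℝ) : ℝ :=
  if 0 < y then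
    (1 / Real.sqrt (2 * Real.pi * t)) *
      (Real.exp (-(y - x)^2 / (2 * t)) + ((p - q) / (p + q)) * Real.exp (-(y + x)^2 / (2 * t)))
  else
    (1 / Real.sqrt (2 * Real.pi * t)) * (2 * q / (p + q)) * Real.exp (-(y - x)^2 / (2 * t))

/-- Transition density `γ⁻(t,x,y)` for a starting point `x < 0`. -/
noncomputable def gammaMinus (p q t x y : ℝ) : ℝ :=
  if y < 0 then
    (1 / Real.sqrt (2 * Real.pi * t)) *
      (Real.exp (-(y - x)^2 / (2 * t)) + ((q - p) / (p + q)) * Real.exp (-(y + x)^2 / (2 * t)))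
  else
    (1 / Real.sqrt (2 * Real.pi * t)) * (2 * p / (p + q)) * Real.exp (-(y - x)^2 / (2 * t))

/-!
Substituting `y = x + s` and `y = x - s` turns the symmetric part `(f (x + s) + f (x - s)) / 2` of
`C*(s)f(x)` into half the Gaussian integral of `f` centred at `x` over the whole line. The
correction term lives only on `s > x`, where `y = s - x` and `y = x - s` carry it onto the
reflected Gaussian `exp (-(y + x) ^ 2 / (2 * t))` on `y > 0` and onto the Gaussian centred at `x`
on `y ≤ 0`. These are exactly the two corrections to the free heat kernel in `γ⁺`, since
`2 * q / (p + q) = 1 - (p - q) / (p + q)`.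
-/

open Set

theorem setIntegral_Ioi_comp_add_right (g : ℝ → ℝ) (a c : ℝ) :
    ∫ s in Ioi c, g (s + a) = ∫ y in Ioi (c + a), g y := by
  have := (measurePreserving_add_right volume a).setIntegral_preimage_emb
    (Homeomorph.addRight a).measurableEmbedding g (Ioi (c + a))
  rwa [preimage_add_const_Ioi, add_sub_cancel_right] at this

theorem setIntegral_Ioi_comp_sub_left (g : ℝ → ℝ) (a c : ℝ) :
    ∫ s in Ioi c, g (a - s) = ∫ y in Iic (a - c), g y := by
  have := (Measure.measurePreserving_sub_left volume a).setIntegral_preimage_emb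
    (Homeomorph.subLeft a).measurableEmbedding g (Iio (a - c))
  rwa [preimage_const_sub_Iio, sub_sub_cancel, ← integral_Iic_eq_integral_Iio] at this

noncomputable def gaussianWeighted (t : ℝ) (f : ℝ → ℝ) (a y : ℝ) : ℝ :=
  exp (-(y - a) ^ 2 / (2 * t)) * f y

theorem gaussianWeighted_add_self (t : ℝ) (f : ℝ → ℝ) (a s : ℝ) :
    gaussianWeighted t f a (s + a) = exp (-s ^ 2 / (2 * t)) * f (s + a) := by
  simp [gaussianWeighted]

theorem gaussianWeighted_self_sub (t : ℝ) (f : ℝ → ℝ) (a s : ℝ) :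
    gaussianWeighted t f a (a - s) = exp (-s ^ 2 / (2 * t)) * f (a - s) := by
  simp [gaussianWeighted]

theorem integrable_gaussianWeighted {t M : ℝ} {f : ℝ → ℝ} (ht : 0 < t)
    (hf : AEStronglyMeasurable f) (hM : ∀ y, |f y| ≤ M) (a : ℝ) :
    Integrable (gaussianWeighted t f a) := by
  have hexp : Integrable fun y => exp (-(2 * t)⁻¹ * (y - a) ^ 2) :=
    (integrable_exp_neg_mul_sq (by positivity)).comp_sub_right a
  refine (hexp.mul_bdd hf (c := M) (.of_forall hM)).congr (.of_forall fun y => ?_)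
  simp only [gaussianWeighted]
  ring_nf

theorem sqrt_two_div_pi_mul (t : ℝ) : √(2 / (π * t)) = 2 * (1 / √(2 * π * t)) := by
  rw [show 2 / (π * t) = 2 ^ 2 / (2 * π * t) by ring, sqrt_div (by positivity),
    sqrt_sq zero_le_two]
  ring

theorem Cstar_of_pos (p q : ℝ) (f : ℝ → ℝ) {s x : ℝ} (hs : 0 < s) (hx : 0 < x) :
    Cstar p q s f x = (f (s + x) + f (x - s)) / 2 +
      (Ioi x).indicator (fun s => (p - q) / (p + q) / 2 * (f (s - x) - f (x - s))) s := by
  rw [Cstar, abs_of_pos hs, abs_of_pos hx, add_comm x s]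
  by_cases hsx : s ≤ x
  · rw [if_pos hsx, indicator_of_notMem (show s ∉ Ioi x from not_lt.mpr hsx), add_zero]
  · rw [if_neg hsx, if_neg (by linarith), indicator_of_mem (show s ∈ Ioi x from not_le.mp hsx),
      div_div, mul_comm (p + q)]

theorem integral_exp_mul_Cstar (p q : ℝ) {t x M : ℝ} {f : ℝ → ℝ} (ht : 0 < t)
    (hf : AEStronglyMeasurable f) (hM : ∀ y, |f y| ≤ M) (hx : 0 < x) :
    ∫ s in Ioi 0, exp (-s ^ 2 / (2 * t)) * Cstar p q s f x =
      1 / 2 * ((∫ y, gaussianWeighted t f x y) + (p - q) / (p + q) *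
        ((∫ y in Ioi 0, gaussianWeighted t f (-x) y) - ∫ y in Iic 0, gaussianWeighted t f x y)) := by
  set G := gaussianWeighted t f
  set c := (p - q) / (p + q) / 2
  have hG := integrable_gaussianWeighted ht hf hM
  have hplus : Integrable fun s => G x (s + x) := (hG x).comp_add_right x
  have hminus : Integrable fun s => G x (x - s) := (hG x).comp_sub_left x
  have hrefl : Integrable fun s => G (-x) (s + -x) := (hG (-x)).comp_add_right (-x)
  have hmean : Integrable fun s => (G x (s + x) + G x (x - s)) / 2 :=
    (hplus.add hminus).div_const 2
  have hcorr : Integrable fun s => c * (G (-x) (s + -x) - G x (x - s)) :=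
    (hrefl.sub hminus).const_mul c
  have hintegrand : ∀ s ∈ Ioi (0 : ℝ), exp (-s ^ 2 / (2 * t)) * Cstar p q s f x =
      (G x (s + x) + G x (x - s)) / 2 +
        (Ioi x).indicator (fun s => c * (G (-x) (s + -x) - G x (x - s))) s := by
    intro s hs
    simp only [G, gaussianWeighted_add_self, gaussianWeighted_self_sub, indicator_apply]
    simp only [Cstar_of_pos p q f hs hx, indicator_apply, ← sub_eq_add_neg]
    split_ifs <;> ring
  rw [setIntegral_congr_fun measurableSet_Ioi hintegrand,
    integral_add hmean.integrableOn (hcorr.indicator measurableSet_Ioi).integrableOn,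
    setIntegral_indicator measurableSet_Ioi, Ioi_inter_Ioi, sup_eq_right.mpr hx.le,
    integral_div, integral_add hplus.integrableOn hminus.integrableOn, integral_const_mul,
    integral_sub hrefl.integrableOn hminus.integrableOn]
  rw [setIntegral_Ioi_comp_add_right, setIntegral_Ioi_comp_sub_left,
    setIntegral_Ioi_comp_add_right, setIntegral_Ioi_comp_sub_left, zero_add, sub_zero,
    add_neg_cancel, sub_self, add_comm (∫ y in Ioi x, G x y),
    intervalIntegral.integral_Iic_add_Ioi (hG x).integrableOn (hG x).integrableOn]
  ring

theorem gammaPlus_mul_eq {p q : ℝ} (hpq : p + q ≠ 0) (t : ℝ) (f : ℝ → ℝ) (x y : ℝ) :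
    gammaPlus p q t x y * f y = 1 / √(2 * π * t) * (gaussianWeighted t f x y + (p - q) / (p + q) *
      ((Ioi 0).indicator (gaussianWeighted t f (-x)) y -
        (Iic 0).indicator (gaussianWeighted t f x) y)) := by
  by_cases hy : 0 < y
  · simp only [gammaPlus, gaussianWeighted, if_pos hy, indicator_of_mem (show y ∈ Ioi 0 from hy),
      indicator_of_notMem (show y ∉ Iic 0 from not_le.mpr hy), sub_neg_eq_add]
    ring
  · simp only [gammaPlus, gaussianWeighted, if_neg hy,
      indicator_of_notMem (show y ∉ Ioi 0 from hy),
      indicator_of_mem (show y ∈ Iic 0 from not_lt.mp hy)]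
    field_simp
    ring

theorem integral_gammaPlus_mul {p q t M : ℝ} {f : ℝ → ℝ} (hpq : p + q ≠ 0) (ht : 0 < t)
    (hf : AEStronglyMeasurable f) (hM : ∀ y, |f y| ≤ M) (x : ℝ) :
    ∫ y, gammaPlus p q t x y * f y = 1 / √(2 * π * t) * ((∫ y, gaussianWeighted t f x y) +
      (p - q) / (p + q) * ((∫ y in Ioi 0, gaussianWeighted t f (-x) y) -
        ∫ y in Iic 0, gaussianWeighted t f x y)) := by
  have hG := integrable_gaussianWeighted ht hf hM
  have hpos : Integrable ((Ioi (0 : ℝ)).indicator (gaussianWeighted t f (-x))) :=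
    (hG (-x)).indicator measurableSet_Ioi
  have hneg : Integrable ((Iic (0 : ℝ)).indicator (gaussianWeighted t f x)) :=
    (hG x).indicator measurableSet_Iic
  have hcorr : Integrable fun y => (p - q) / (p + q) *
      ((Ioi 0).indicator (gaussianWeighted t f (-x)) y -
        (Iic 0).indicator (gaussianWeighted t f x) y) := (hpos.sub hneg).const_mul _
  simp_rw [gammaPlus_mul_eq hpq]
  rw [integral_const_mul, integral_add (hG x) hcorr, integral_const_mul,
    integral_sub hpos hneg, integral_indicator measurableSet_Ioi,
    integral_indicator measurableSet_Iic]

theorem stmt15_general (p q : ℝ) (hpq : 0 < p + q)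
    (t x : ℝ) (ht : 0 < t) (hx : 0 < x)
    (f : ℝ → ℝ) (hf : Continuous f) (hb : ∃ M, ∀ y, |f y| ≤ M) :
    Real.sqrt (2 / (Real.pi * t)) *
        ∫ s in Set.Ioi (0:ℝ), Real.exp (-s^2 / (2 * t)) * Cstar p q s f x
      = ∫ y : ℝ, gammaPlus p q t x y * f y := by
  obtain ⟨M, hM⟩ := hb
  rw [integral_exp_mul_Cstar p q ht hf.aestronglyMeasurable hM hx,
    integral_gammaPlus_mul hpq.ne' ht hf.aestronglyMeasurable hM, sqrt_two_div_pi_mul]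
  ring

theorem stmt15 (p q : ℝ) (hp : 0 ≤ p) (hq : 0 ≤ q) (hpq : 0 < p + q)
    (t x : ℝ) (ht : 0 < t) (hx : 0 < x)
    (f : ℝ → ℝ) (hf : Continuous f) (hb : ∃ M, ∀ y, |f y| ≤ M) :
    Real.sqrt (2 / (Real.pi * t)) *
        ∫ s in Set.Ioi (0:ℝ), Real.exp (-s^2 / (2 * t)) * Cstar p q s f x
      = ∫ y : ℝ, gammaPlus p q t x y * f y :=
  stmt15_general p q hpq t x ht hx f hf hb
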